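/- The matching complex of the complete bipartite graph K₃,₂ is a 6-cycle; moreover, if M(G) is isomorphic to the cycle C₆ then G is isomorphic to K₃,₂. -/

import Mathlib

open SimpleGraph Finset

/-- Two edges (elements of `Sym2 V`) are incident if they share a vertex. -/
def Incid {V : Type} (e f : Sym2 V) : Prop := ∃ v, v ∈ e ∧ v ∈ f

/-- A face of the matching complex `M(G)`: a finite set of edges of `G`
that are pairwise non-incident (a matching of `G`). -/
def IsMatchingSet {V : Type} (G : SimpleGraph V) (s : Finset (Sym2 V)) : Prop :=
  (∀ e ∈ s, e ∈ G.edgeSet) ∧ ∀ e ∈ s, ∀ f ∈ s, e ≠ f → ¬ Incid e f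

/-- The 1-skeleton of the matching complex of `G`: the graph whose vertices are
the edges of `G`, two being adjacent iff they are distinct and non-incident. -/
def mcSkeleton {V : Type} (G : SimpleGraph V) : SimpleGraph G.edgeSet where
  Adj e f := e ≠ f ∧ ¬ Incid (e : Sym2 V) (f : Sym2 V)
  symm := ⟨fun e f h =>
    ⟨h.1.symm, fun hi => h.2 (Exists.elim hi fun v hv => ⟨v, hv.2, hv.1⟩)⟩⟩
  loopless := ⟨fun e h => h.1 rfl⟩

/-- The cycle on `ZMod n`. -/
def cycZ (n : ℕ) : SimpleGraph (ZMod n) :=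
  SimpleGraph.fromRel (fun i j => j = i + 1)

/-- The complete bipartite graph `K₃,₂`. -/
def K32 : SimpleGraph (Fin 3 ⊕ Fin 2) := completeBipartiteGraph (Fin 3) (Fin 2)

instance : DecidableRel K32.Adj := fun a b =>
  decidable_of_iff (a.isLeft ∧ b.isRight ∨ a.isRight ∧ b.isLeft) Iff.rfl

instance {V : Type} [Fintype V] [DecidableEq V] (e f : Sym2 V) : Decidable (Incid e f) :=
  decidable_of_iff (∃ v, v ∈ e ∧ v ∈ f) Iff.rfl

def pe (i : Fin 3) (j : Fin 2) : Sym2 (Fin 3 ⊕ Fin 2) := s(Sum.inl i, Sum.inr j)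

def gmap : ZMod 6 → K32.edgeSet
  | 0 => ⟨pe 0 0, by decide⟩
  | 1 => ⟨pe 1 1, by decide⟩
  | 2 => ⟨pe 2 0, by decide⟩
  | 3 => ⟨pe 0 1, by decide⟩
  | 4 => ⟨pe 1 0, by decide⟩
  | 5 => ⟨pe 2 1, by decide⟩

instance {V : Type} [Fintype V] [DecidableEq V] (G : SimpleGraph V) :
    DecidableRel (mcSkeleton G).Adj := fun e f =>
  decidable_of_iff (e ≠ f ∧ ¬ Incid (e : Sym2 V) (f : Sym2 V)) Iff.rfl

instance (n : ℕ) : DecidableRel (cycZ n).Adj := fun a b =>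
  decidable_of_iff (a ≠ b ∧ (b = a + 1 ∨ a = b + 1)) Iff.rfl

lemma gbij : Function.Bijective gmap := by decide

lemma gadj : ∀ a b : ZMod 6,
    (mcSkeleton K32).Adj (gmap a) (gmap b) ↔ (cycZ 6).Adj a b := by decide

noncomputable def giso : cycZ 6 ≃g mcSkeleton K32 where
  toEquiv := Equiv.ofBijective gmap gbij
  map_rel_iff' := fun {a b} => gadj a b

set_option maxHeartbeats 1000000 in
lemma tri {V : Type} {A B C D : Sym2 V} (hAB : Incid A B) (hAC : Incid A C)
    (hBC : Incid B C) (hAD : Incid A D) (hBD : ¬ Incid B D) (hCD : ¬ Incid C D) :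
    ∃ u, u ∈ A ∧ u ∈ B ∧ u ∈ C := by
  obtain ⟨x, hxA, hxB⟩ := hAB
  obtain ⟨y, hyA, hyC⟩ := hAC
  by_cases hxy : x = y
  · exact ⟨x, hxA, hxB, hxy ▸ hyC⟩
  obtain ⟨z, hzB, hzC⟩ := hBC
  by_cases hzx : z = x
  · exact ⟨x, hxA, hxB, hzx ▸ hzC⟩
  by_cases hzy : z = y
  · exact ⟨y, hyA, hzy ▸ hzB, hyC⟩
  obtain ⟨w, hwA, hwD⟩ := hAD
  have hA : A = s(x, y) := (Sym2.mem_and_mem_iff hxy).mp ⟨hxA, hyA⟩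
  rw [hA, Sym2.mem_iff] at hwA
  rcases hwA with rfl | rfl
  · exact absurd ⟨w, hxB, hwD⟩ hBD
  · exact absurd ⟨w, hyC, hwD⟩ hCD

set_option maxHeartbeats 2000000 in
lemma recon {V : Type} [Fintype V] [DecidableEq V] (G : SimpleGraph V)
    (hdeg : ∀ v : V, ∃ w, G.Adj v w)
    (φ : mcSkeleton G ≃g cycZ 6) : Nonempty (G ≃g K32) := by
  set e : ZMod 6 → G.edgeSet := fun i => φ.symm i with he
  have einj : Function.Injective e := fun i j h => φ.toEquiv.symm.injective h
  have hAdj : ∀ i j, (mcSkeleton G).Adj (e i) (e j) ↔ (cycZ 6).Adj i j :=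
    fun i j => φ.symm.map_rel_iff
  have hni : ∀ i j : ZMod 6, (cycZ 6).Adj i j →
      ¬ Incid (e i : Sym2 V) (e j : Sym2 V) := fun i j h => ((hAdj i j).mpr h).2
  have hic : ∀ i j : ZMod 6, i ≠ j → ¬ (cycZ 6).Adj i j →
      Incid (e i : Sym2 V) (e j : Sym2 V) := by
    intro i j hij hc
    by_contra h
    exact hc ((hAdj i j).mp ⟨fun hh => hij (einj hh), h⟩)
  -- common vertices of even and odd triangles
  obtain ⟨u, hu0, hu2, hu4⟩ :=
    tri (hic 0 2 (by decide) (by decide)) (hic 0 4 (by decide) (by decide))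
      (hic 2 4 (by decide) (by decide)) (hic 0 3 (by decide) (by decide))
      (hni 2 3 (by decide)) (hni 4 3 (by decide))
  obtain ⟨v, hv1, hv3, hv5⟩ :=
    tri (hic 1 3 (by decide) (by decide)) (hic 1 5 (by decide) (by decide))
      (hic 3 5 (by decide) (by decide)) (hic 1 4 (by decide) (by decide))
      (hni 3 4 (by decide)) (hni 5 4 (by decide))
  -- nonmemberships
  have hv0 : v ∉ (e 0 : Sym2 V) := fun h => hni 0 1 (by decide) ⟨v, h, hv1⟩
  have hv2 : v ∉ (e 2 : Sym2 V) := fun h => hni 1 2 (by decide) ⟨v, hv1, h⟩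
  have hv4 : v ∉ (e 4 : Sym2 V) := fun h => hni 3 4 (by decide) ⟨v, hv3, h⟩
  have hu1 : u ∉ (e 1 : Sym2 V) := fun h => hni 0 1 (by decide) ⟨u, hu0, h⟩
  have hu3 : u ∉ (e 3 : Sym2 V) := fun h => hni 2 3 (by decide) ⟨u, hu2, h⟩
  have hu5 : u ∉ (e 5 : Sym2 V) := fun h => hni 4 5 (by decide) ⟨u, hu4, h⟩
  have huv : u ≠ v := fun h => hv0 (h ▸ hu0)
  -- other endpoints
  set a0 := Sym2.Mem.other hu0 with ha0
  set a2 := Sym2.Mem.other hu2 with ha2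
  set a4 := Sym2.Mem.other hu4 with ha4
  have hs0 : (e 0 : Sym2 V) = s(u, a0) := (Sym2.other_spec hu0).symm
  have hs2 : (e 2 : Sym2 V) = s(u, a2) := (Sym2.other_spec hu2).symm
  have hs4 : (e 4 : Sym2 V) = s(u, a4) := (Sym2.other_spec hu4).symm
  have hadj0 : G.Adj u a0 := G.mem_edgeSet.mp (hs0 ▸ (e 0).2)
  have hadj2 : G.Adj u a2 := G.mem_edgeSet.mp (hs2 ▸ (e 2).2)
  have hadj4 : G.Adj u a4 := G.mem_edgeSet.mp (hs4 ▸ (e 4).2)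
  -- a0 ∈ e 3, a2 ∈ e 5, a4 ∈ e 1
  have ha03 : a0 ∈ (e 3 : Sym2 V) := by
    obtain ⟨w, hw0, hw3⟩ := hic 0 3 (by decide) (by decide)
    rw [hs0, Sym2.mem_iff] at hw0
    rcases hw0 with rfl | rfl
    · exact absurd hw3 hu3
    · exact hw3
  have ha25 : a2 ∈ (e 5 : Sym2 V) := by
    obtain ⟨w, hw2, hw5⟩ := hic 2 5 (by decide) (by decide)
    rw [hs2, Sym2.mem_iff] at hw2
    rcases hw2 with rfl | rfl
    · exact absurd hw5 hu5
    · exact hw5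
  have ha41 : a4 ∈ (e 1 : Sym2 V) := by
    obtain ⟨w, hw1, hw4⟩ := hic 1 4 (by decide) (by decide)
    rw [hs4, Sym2.mem_iff] at hw4
    rcases hw4 with rfl | rfl
    · exact absurd hw1 hu1
    · exact hw1
  have hva0 : v ≠ a0 := fun h => hv0 (hs0 ▸ (h ▸ Sym2.mem_mk_right u a0))
  have hva2 : v ≠ a2 := fun h => hv2 (hs2 ▸ (h ▸ Sym2.mem_mk_right u a2))
  have hva4 : v ≠ a4 := fun h => hv4 (hs4 ▸ (h ▸ Sym2.mem_mk_right u a4))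
  have hs3 : (e 3 : Sym2 V) = s(v, a0) := (Sym2.mem_and_mem_iff hva0).mp ⟨hv3, ha03⟩
  have hs5 : (e 5 : Sym2 V) = s(v, a2) := (Sym2.mem_and_mem_iff hva2).mp ⟨hv5, ha25⟩
  have hs1 : (e 1 : Sym2 V) = s(v, a4) := (Sym2.mem_and_mem_iff hva4).mp ⟨hv1, ha41⟩
  have hadj3 : G.Adj v a0 := G.mem_edgeSet.mp (hs3 ▸ (e 3).2)
  have hadj5 : G.Adj v a2 := G.mem_edgeSet.mp (hs5 ▸ (e 5).2)
  have hadj1 : G.Adj v a4 := G.mem_edgeSet.mp (hs1 ▸ (e 1).2)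
  -- distinctness
  have hua0 : u ≠ a0 := hadj0.ne
  have hua2 : u ≠ a2 := hadj2.ne
  have hua4 : u ≠ a4 := hadj4.ne
  have h02 : a0 ≠ a2 := by
    intro h
    exact (by decide : (0 : ZMod 6) ≠ 2) (einj (Subtype.ext (by rw [hs0, hs2, h])))
  have h04 : a0 ≠ a4 := by
    intro h
    exact (by decide : (0 : ZMod 6) ≠ 4) (einj (Subtype.ext (by rw [hs0, hs4, h])))
  have h24 : a2 ≠ a4 := by
    intro h
    exact (by decide : (2 : ZMod 6) ≠ 4) (einj (Subtype.ext (by rw [hs2, hs4, h])))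
  -- every edge of G is one of the six
  have hsix : ∀ i : ZMod 6, i = 0 ∨ i = 1 ∨ i = 2 ∨ i = 3 ∨ i = 4 ∨ i = 5 := by decide
  have hall : ∀ i : ZMod 6, (e i : Sym2 V) = s(u, a0) ∨ (e i : Sym2 V) = s(u, a2) ∨
      (e i : Sym2 V) = s(u, a4) ∨ (e i : Sym2 V) = s(v, a0) ∨
      (e i : Sym2 V) = s(v, a2) ∨ (e i : Sym2 V) = s(v, a4) := by
    intro i
    rcases hsix i with rfl | rfl | rfl | rfl | rfl | rfl <;> tauto
  have hedge : ∀ {x y : V}, G.Adj x y → ∃ i : ZMod 6, (e i : Sym2 V) = s(x, y) := by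
    intro x y h
    exact ⟨φ ⟨s(x, y), G.mem_edgeSet.mpr h⟩,
      congrArg Subtype.val (φ.symm_apply_apply ⟨s(x, y), G.mem_edgeSet.mpr h⟩)⟩
  have hAdjIff : ∀ x y : V, G.Adj x y ↔ (s(x,y) = s(u,a0) ∨ s(x,y) = s(u,a2) ∨
      s(x,y) = s(u,a4) ∨ s(x,y) = s(v,a0) ∨ s(x,y) = s(v,a2) ∨ s(x,y) = s(v,a4)) := by
    intro x y
    constructor
    · intro h
      obtain ⟨i, hi⟩ := hedge h
      rcases hall i with hh | hh | hh | hh | hh | hh <;> rw [hi] at hh <;> tauto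
    · have hadj0' := hadj0.symm; have hadj2' := hadj2.symm; have hadj4' := hadj4.symm
      have hadj1' := hadj1.symm; have hadj3' := hadj3.symm; have hadj5' := hadj5.symm
      intro h
      rcases h with h | h | h | h | h | h <;> rw [Sym2.eq_iff] at h <;>
        rcases h with ⟨rfl, rfl⟩ | ⟨rfl, rfl⟩ <;> assumption
  have hcov : ∀ x : V, x = a0 ∨ x = a2 ∨ x = a4 ∨ x = u ∨ x = v := by
    intro x
    obtain ⟨w, hw⟩ := hdeg x
    obtain ⟨i, hi⟩ := hedge hw
    have hx : x ∈ (e i : Sym2 V) := by rw [hi]; exact Sym2.mem_mk_left x w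
    rcases hall i with h | h | h | h | h | h <;> rw [h, Sym2.mem_iff] at hx <;> tauto
  -- build the isomorphism
  set g : Fin 3 ⊕ Fin 2 → V := Sum.elim (![a0, a2, a4]) (![u, v]) with hg
  set f : V → Fin 3 ⊕ Fin 2 := fun x =>
    if x = a0 then Sum.inl 0 else if x = a2 then Sum.inl 1 else
    if x = a4 then Sum.inl 2 else if x = u then Sum.inr 0 else Sum.inr 1 with hf
  have h20 := h02.symm; have h40 := h04.symm; have h42 := h24.symm
  have ha0u := hua0.symm; have ha2u := hua2.symm; have ha4u := hua4.symm
  have ha0v := hva0.symm; have ha2v := hva2.symm; have ha4v := hva4.symm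
  have hvu := huv.symm
  have hfg : ∀ p, f (g p) = p := by
    intro p
    rcases p with i | i <;> fin_cases i <;>
      simp [hf, hg, h02, h04, h24, h20, h40, h42, ha0u, ha2u, ha4u, ha0v, ha2v, ha4v,
        huv, hvu, hua0, hua2, hua4, hva0, hva2, hva4]
  have hgf : ∀ x, g (f x) = x := by
    intro x
    rcases hcov x with rfl | rfl | rfl | rfl | rfl <;>
      simp [hf, hg, h02, h04, h24, h20, h40, h42, ha0u, ha2u, ha4u, ha0v, ha2v, ha4v,
        huv, hvu, hua0, hua2, hua4, hva0, hva2, hva4]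
  refine ⟨SimpleGraph.Iso.symm ⟨⟨g, f, hfg, hgf⟩, ?_⟩⟩
  intro p q
  rcases p with i | i <;> rcases q with j | j <;> fin_cases i <;> fin_cases j <;>
    simp [hAdjIff, hg, K32, completeBipartiteGraph, Sym2.eq_iff,
      h02, h04, h24, h20, h40, h42, ha0u, ha2u, ha4u, ha0v, ha2v, ha4v,
      huv, hvu, hua0, hua2, hua4, hva0, hva2, hva4]

/-- `M(K₃,₂) ≅ C₆`; moreover, if `M(G) ≅ C₆` then `G ≅ K₃,₂`. -/
theorem matchingComplex_C6 :
    Nonempty (mcSkeleton K32 ≃g cycZ 6) ∧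
    (∀ {V : Type} [Fintype V] [DecidableEq V] (G : SimpleGraph V),
      (∀ v : V, ∃ w, G.Adj v w) →
      Nonempty (mcSkeleton G ≃g cycZ 6) → Nonempty (G ≃g K32)) :=
  ⟨⟨giso.symm⟩, fun G hdeg hiso => hiso.elim fun φ => recon G hdeg φ⟩
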